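/- arXiv:math/0504469 — 7 statements merged into one kernel-verified Lean document; each statement's English description precedes it below -/
import Mathlib

section
/- The linear map α: sl(n+2,ℝ) → sl(2n+2,ℝ) defined on blocks by α([[a,u,d],[x,B,v],[z,y,c]]) = [[(a−c)/2, d, u/2, v^T/2], [z, (c−a)/2, y/2, −x^T/2], [x, v, B−((a+c)/2)·id, 0], [y^T, −u^T, 0, −B^T+((a+c)/2)·id]] (source blocks of sizes 1, n, 1; target blocks of sizes 1, 1, n, n) is a well-defined injective linear map, i.e. it maps trace-free matrices to trace-free matrices and has trivial kernel. -/
/-- Index type for block decomposition of size 1, n, 1 (source side). -/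
abbrev Idx (n : ℕ) := Unit ⊕ Fin n ⊕ Unit

/-- Index type for block decomposition of sizes 1, 1, n, n (target side). -/
abbrev Jdx (n : ℕ) := Unit ⊕ Unit ⊕ Fin n ⊕ Fin n

/-- The linear map `α : sl(n+2,ℝ) → sl(2n+2,ℝ)` of the paper, written blockwise:
for `A = [[a,u,d],[x,B,v],[z,y,c]]` (blocks 1, n, 1),
`α(A) = [[(a−c)/2, d, u/2, vᵀ/2], [z, (c−a)/2, y/2, −xᵀ/2],
[x, v, B−((a+c)/2)·id, 0], [yᵀ, −uᵀ, 0, −Bᵀ+((a+c)/2)·id]]` (blocks 1, 1, n, n). -/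
noncomputable def alphaMap {n : ℕ} (A : Matrix (Idx n) (Idx n) ℝ) : Matrix (Jdx n) (Jdx n) ℝ :=
  Matrix.of fun i j =>
    match i, j with
    | Sum.inl _, Sum.inl _ =>
        (A (Sum.inl ()) (Sum.inl ()) - A (Sum.inr (Sum.inr ())) (Sum.inr (Sum.inr ()))) / 2
    | Sum.inl _, Sum.inr (Sum.inl _) => A (Sum.inl ()) (Sum.inr (Sum.inr ()))
    | Sum.inl _, Sum.inr (Sum.inr (Sum.inl k)) => A (Sum.inl ()) (Sum.inr (Sum.inl k)) / 2
    | Sum.inl _, Sum.inr (Sum.inr (Sum.inr k)) => A (Sum.inr (Sum.inl k)) (Sum.inr (Sum.inr ())) / 2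
    | Sum.inr (Sum.inl _), Sum.inl _ => A (Sum.inr (Sum.inr ())) (Sum.inl ())
    | Sum.inr (Sum.inl _), Sum.inr (Sum.inl _) =>
        (A (Sum.inr (Sum.inr ())) (Sum.inr (Sum.inr ())) - A (Sum.inl ()) (Sum.inl ())) / 2
    | Sum.inr (Sum.inl _), Sum.inr (Sum.inr (Sum.inl k)) =>
        A (Sum.inr (Sum.inr ())) (Sum.inr (Sum.inl k)) / 2
    | Sum.inr (Sum.inl _), Sum.inr (Sum.inr (Sum.inr k)) =>
        -(A (Sum.inr (Sum.inl k)) (Sum.inl ())) / 2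
    | Sum.inr (Sum.inr (Sum.inl k)), Sum.inl _ => A (Sum.inr (Sum.inl k)) (Sum.inl ())
    | Sum.inr (Sum.inr (Sum.inl k)), Sum.inr (Sum.inl _) =>
        A (Sum.inr (Sum.inl k)) (Sum.inr (Sum.inr ()))
    | Sum.inr (Sum.inr (Sum.inl k)), Sum.inr (Sum.inr (Sum.inl l)) =>
        A (Sum.inr (Sum.inl k)) (Sum.inr (Sum.inl l)) -
          (if k = l then (A (Sum.inl ()) (Sum.inl ()) +
            A (Sum.inr (Sum.inr ())) (Sum.inr (Sum.inr ()))) / 2 else 0)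
    | Sum.inr (Sum.inr (Sum.inl _)), Sum.inr (Sum.inr (Sum.inr _)) => 0
    | Sum.inr (Sum.inr (Sum.inr k)), Sum.inl _ => A (Sum.inr (Sum.inr ())) (Sum.inr (Sum.inl k))
    | Sum.inr (Sum.inr (Sum.inr k)), Sum.inr (Sum.inl _) => -(A (Sum.inl ()) (Sum.inr (Sum.inl k)))
    | Sum.inr (Sum.inr (Sum.inr _)), Sum.inr (Sum.inr (Sum.inl _)) => 0
    | Sum.inr (Sum.inr (Sum.inr k)), Sum.inr (Sum.inr (Sum.inr l)) =>
        -(A (Sum.inr (Sum.inl l)) (Sum.inr (Sum.inl k))) +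
          (if k = l then (A (Sum.inl ()) (Sum.inl ()) +
            A (Sum.inr (Sum.inr ())) (Sum.inr (Sum.inr ()))) / 2 else 0)

/-- The matrix `[[p,0,s],[0,R,0],[0,0,q]]` representing an element of `Q`. -/
noncomputable def qMat {n : ℕ} (p s q : ℝ) (R : Matrix (Fin n) (Fin n) ℝ) : Matrix (Idx n) (Idx n) ℝ :=
  Matrix.of fun i j =>
    match i, j with
    | Sum.inl _, Sum.inl _ => p
    | Sum.inl _, Sum.inr (Sum.inr _) => s
    | Sum.inr (Sum.inl k), Sum.inr (Sum.inl l) => R k l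
    | Sum.inr (Sum.inr _), Sum.inr (Sum.inr _) => q
    | _, _ => 0

/-- The map `i : Q → P̃` of the paper on representative matrices. -/
noncomputable def iMap {n : ℕ} (p s q : ℝ) (R : Matrix (Fin n) (Fin n) ℝ) :
    Matrix (Jdx n) (Jdx n) ℝ :=
  Matrix.of fun i j =>
    match i, j with
    | Sum.inl _, Sum.inl _ => Real.sign (q / p) * Real.sqrt |p / q|
    | Sum.inl _, Sum.inr (Sum.inl _) => Real.sign (q / p) * (s / p) * Real.sqrt |p / q|
    | Sum.inr (Sum.inl _), Sum.inr (Sum.inl _) => Real.sqrt |q / p|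
    | Sum.inr (Sum.inr (Sum.inl k)), Sum.inr (Sum.inr (Sum.inl l)) =>
        q⁻¹ * Real.sqrt |q / p| * R k l
    | Sum.inr (Sum.inr (Sum.inr k)), Sum.inr (Sum.inr (Sum.inr l)) =>
        p * Real.sqrt |q / p| * R⁻¹ l k
    | _, _ => 0



/-- `α` is a well-defined injective linear map `sl(n+2,ℝ) → sl(2n+2,ℝ)`:
it sends trace-free matrices to trace-free matrices and has trivial kernel on
trace-free matrices. -/
theorem alphaMap_well_defined_injective (n : ℕ) :
    (∀ A : Matrix (Idx n) (Idx n) ℝ, A.trace = 0 → (alphaMap A).trace = 0) ∧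
    (∀ A : Matrix (Idx n) (Idx n) ℝ, A.trace = 0 → alphaMap A = 0 → A = 0) := by
  constructor
  · intro A hA
    simp only [Matrix.trace, Matrix.diag, Fintype.sum_sum_type, alphaMap, Matrix.of_apply,
      Finset.sum_const, Finset.card_univ, Fintype.card_unit, one_smul]
    simp only [if_true]
    rw [← Finset.sum_add_distrib]
    simp
    ring
  · intro A hA h0
    have he : ∀ i j, alphaMap A i j = 0 := fun i j => by rw [h0]; rfl
    have hac : A (Sum.inl ()) (Sum.inl ()) = A (Sum.inr (Sum.inr ())) (Sum.inr (Sum.inr ())) := by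
      have := he (Sum.inl ()) (Sum.inl ())
      simp [alphaMap] at this
      linarith
    have hB : ∀ k l : Fin n, A (Sum.inr (Sum.inl k)) (Sum.inr (Sum.inl l)) =
        if k = l then A (Sum.inl ()) (Sum.inl ()) else 0 := by
      intro k l
      have := he (Sum.inr (Sum.inr (Sum.inl k))) (Sum.inr (Sum.inr (Sum.inl l)))
      simp only [alphaMap, Matrix.of_apply] at this
      by_cases hkl : k = l
      · simp [hkl, ← hac] at this ⊢; linarith
      · simp [hkl] at this ⊢; linarith
    have ha : A (Sum.inl ()) (Sum.inl ()) = 0 := by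
      have htr : A.trace = A (Sum.inl ()) (Sum.inl ()) +
          ((∑ k : Fin n, A (Sum.inr (Sum.inl k)) (Sum.inr (Sum.inl k))) +
            A (Sum.inr (Sum.inr ())) (Sum.inr (Sum.inr ()))) := by
        simp [Matrix.trace, Matrix.diag, Fintype.sum_sum_type]
      rw [hA] at htr
      have hsum : (∑ k : Fin n, A (Sum.inr (Sum.inl k)) (Sum.inr (Sum.inl k))) =
          n * A (Sum.inl ()) (Sum.inl ()) := by
        simp [hB]
      rw [hsum, ← hac] at htr
      have hn : (0:ℝ) ≤ n := Nat.cast_nonneg n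
      nlinarith
    ext i j
    match i, j with
    | Sum.inl (), Sum.inl () => simpa using ha
    | Sum.inl (), Sum.inr (Sum.inl k) =>
        have := he (Sum.inl ()) (Sum.inr (Sum.inr (Sum.inl k)))
        simp [alphaMap] at this; simpa using this
    | Sum.inl (), Sum.inr (Sum.inr ()) =>
        have := he (Sum.inl ()) (Sum.inr (Sum.inl ()))
        simpa [alphaMap] using this
    | Sum.inr (Sum.inl k), Sum.inl () =>
        have := he (Sum.inr (Sum.inr (Sum.inl k))) (Sum.inl ())
        simpa [alphaMap] using this
    | Sum.inr (Sum.inl k), Sum.inr (Sum.inl l) =>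
        have := hB k l
        simp [this, ha]
    | Sum.inr (Sum.inl k), Sum.inr (Sum.inr ()) =>
        have := he (Sum.inr (Sum.inr (Sum.inl k))) (Sum.inr (Sum.inl ()))
        simpa [alphaMap] using this
    | Sum.inr (Sum.inr ()), Sum.inl () =>
        have := he (Sum.inr (Sum.inl ())) (Sum.inl ())
        simpa [alphaMap] using this
    | Sum.inr (Sum.inr ()), Sum.inr (Sum.inl k) =>
        have := he (Sum.inr (Sum.inr (Sum.inr k))) (Sum.inl ())
        simpa [alphaMap] using this
    | Sum.inr (Sum.inr ()), Sum.inr (Sum.inr ()) => simpa [← hac] using ha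
end

section
/- The map α: sl(n+2,ℝ) → sl(2n+2,ℝ) induces a linear isomorphism from the quotient g/q onto the quotient g̃/p̃, where q ⊂ g is the span of block-diagonal matrices together with g_2, and p̃ ⊂ g̃ = sl(2n+2,ℝ) is the subalgebra of block-upper-triangular matrices with blocks of sizes 1, 1, 2n. -/
/-- Membership in the subalgebra `q = g₀ ⊕ g₂ ⊂ sl(n+2,ℝ)`: block form
`[[a,0,d],[0,B,0],[0,0,c]]`, i.e. the blocks `u`, `x`, `v`, `y`, `z` vanish. -/
def InQalg {n : ℕ} (A : Matrix (Idx n) (Idx n) ℝ) : Prop :=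
  (∀ k : Fin n, A (Sum.inl ()) (Sum.inr (Sum.inl k)) = 0) ∧
  (∀ k : Fin n, A (Sum.inr (Sum.inl k)) (Sum.inl ()) = 0) ∧
  (∀ k : Fin n, A (Sum.inr (Sum.inl k)) (Sum.inr (Sum.inr ())) = 0) ∧
  (∀ k : Fin n, A (Sum.inr (Sum.inr ())) (Sum.inr (Sum.inl k)) = 0) ∧
  A (Sum.inr (Sum.inr ())) (Sum.inl ()) = 0

/-- Block level for the decomposition of `2n+2` into sizes 1, 1, 2n. -/
def lvl {n : ℕ} : Jdx n → ℕ
  | Sum.inl _ => 0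
  | Sum.inr (Sum.inl _) => 1
  | Sum.inr (Sum.inr _) => 2

/-- Membership in the parabolic `p̃ ⊂ sl(2n+2,ℝ)` of block upper triangular matrices
for block sizes 1, 1, 2n. -/
def InPt {n : ℕ} (M : Matrix (Jdx n) (Jdx n) ℝ) : Prop :=
  ∀ i j, lvl j < lvl i → M i j = 0

/-- `α` induces a linear isomorphism `g/q → g̃/p̃`: the composite
`g → g̃ → g̃/p̃` is surjective and its kernel is exactly `q`. -/
theorem alphaMap_induces_iso_on_quotients (n : ℕ) :
    (∀ M : Matrix (Jdx n) (Jdx n) ℝ, M.trace = 0 →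
      ∃ A : Matrix (Idx n) (Idx n) ℝ, A.trace = 0 ∧ InPt (alphaMap A - M)) ∧
    (∀ A : Matrix (Idx n) (Idx n) ℝ, A.trace = 0 → (InPt (alphaMap A) ↔ InQalg A)) := by
  constructor
  · intro M _
    refine ⟨Matrix.of fun i j =>
      match i, j with
      | Sum.inl _, Sum.inr (Sum.inl k) => -(M (Sum.inr (Sum.inr (Sum.inr k))) (Sum.inr (Sum.inl ())))
      | Sum.inr (Sum.inl k), Sum.inl _ => M (Sum.inr (Sum.inr (Sum.inl k))) (Sum.inl ())
      | Sum.inr (Sum.inl k), Sum.inr (Sum.inr _) => M (Sum.inr (Sum.inr (Sum.inl k))) (Sum.inr (Sum.inl ()))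
      | Sum.inr (Sum.inr _), Sum.inr (Sum.inl k) => M (Sum.inr (Sum.inr (Sum.inr k))) (Sum.inl ())
      | Sum.inr (Sum.inr _), Sum.inl _ => M (Sum.inr (Sum.inl ())) (Sum.inl ())
      | _, _ => 0, ?_, ?_⟩
    · simp [Matrix.trace, Matrix.diag]
    · intro i j hij
      rcases i with u | u | k | k <;> rcases j with v | v | l | l <;>
        simp [lvl] at hij ⊢ <;> simp [alphaMap]
  · intro A _
    constructor
    · intro h
      refine ⟨fun k => ?_, fun k => ?_, fun k => ?_, fun k => ?_, ?_⟩
      · have := h (Sum.inr (Sum.inr (Sum.inr k))) (Sum.inr (Sum.inl ())) (by simp [lvl])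
        simpa [alphaMap, neg_eq_zero] using this
      · have := h (Sum.inr (Sum.inr (Sum.inl k))) (Sum.inl ()) (by simp [lvl])
        simpa [alphaMap] using this
      · have := h (Sum.inr (Sum.inr (Sum.inl k))) (Sum.inr (Sum.inl ())) (by simp [lvl])
        simpa [alphaMap] using this
      · have := h (Sum.inr (Sum.inr (Sum.inr k))) (Sum.inl ()) (by simp [lvl])
        simpa [alphaMap] using this
      · have := h (Sum.inr (Sum.inl ())) (Sum.inl ()) (by simp [lvl])
        simpa [alphaMap] using this
    · rintro ⟨hu, hx, hv, hy, hz⟩ i j hij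
      rcases i with u | u | k | k <;> rcases j with w | w | l | l <;>
        simp [lvl] at hij ⊢ <;> simp [alphaMap, hu, hx, hv, hy, hz]
end

section
/- For the elements ξ = [[0,0,0],[X₁,0,0],[a, X₂ᵀ,0]] and η = [[0,0,0],[Y₁,0,0],[b, Y₂ᵀ,0]] of g_{-1} ⊕ g_{-2} ⊂ sl(n+2,ℝ) with X₁,X₂,Y₁,Y₂ ∈ ℝⁿ and a,b ∈ ℝ, the element [α(ξ), α(η)] − α([ξ,η]) of sl(2n+2,ℝ) lies in the block-diagonal subalgebra g̃₀, and in fact its only nonzero blocks are in the lower-right 2n×2n block. -/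
/-- The element `[[0,0,0],[X₁,0,0],[a,X₂ᵀ,0]]` of `g_{-1} ⊕ g_{-2} ⊂ sl(n+2,ℝ)`. -/
noncomputable def xiLow {n : ℕ} (X1 X2 : Fin n → ℝ) (a : ℝ) : Matrix (Idx n) (Idx n) ℝ :=
  Matrix.of fun i j =>
    match i, j with
    | Sum.inr (Sum.inl k), Sum.inl _ => X1 k
    | Sum.inr (Sum.inr _), Sum.inr (Sum.inl k) => X2 k
    | Sum.inr (Sum.inr _), Sum.inl _ => a
    | _, _ => 0

set_option maxHeartbeats 4000000 in
/-- for `ξ, η` of the form `[[0,0,0],[X₁,0,0],[a,X₂ᵀ,0]]`, the element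
`[α(ξ), α(η)] − α([ξ,η])` of `sl(2n+2,ℝ)` lies in the block-diagonal subalgebra `g̃₀`,
with its only (possibly) nonzero blocks in the lower-right 2n×2n block. -/
theorem Psi_alpha_values_in_g0 (n : ℕ) (X1 X2 Y1 Y2 : Fin n → ℝ) (a b : ℝ) :
    ∀ i j : Jdx n,
      (∀ k : Fin n, i ≠ Sum.inr (Sum.inr (Sum.inl k)) ∧ i ≠ Sum.inr (Sum.inr (Sum.inr k))) ∨
      (∀ k : Fin n, j ≠ Sum.inr (Sum.inr (Sum.inl k)) ∧ j ≠ Sum.inr (Sum.inr (Sum.inr k))) →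
      (alphaMap (xiLow X1 X2 a) * alphaMap (xiLow Y1 Y2 b) -
        alphaMap (xiLow Y1 Y2 b) * alphaMap (xiLow X1 X2 a) -
        alphaMap (xiLow X1 X2 a * xiLow Y1 Y2 b - xiLow Y1 Y2 b * xiLow X1 X2 a)) i j = 0 := by
  rintro (⟨⟩|⟨⟩|i|i) (⟨⟩|⟨⟩|j|j) h <;>
    first
      | ((rcases h with h|h <;> simp at h) <;> done)
      | (simp [alphaMap, xiLow, Matrix.mul_apply, Matrix.sub_apply, Fintype.sum_sum_type,
          Finset.mul_sum, Finset.sum_sub_distrib, div_eq_mul_inv, neg_mul, mul_neg,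
          mul_comm, mul_left_comm, mul_assoc] <;>
          (try ring_nf) <;> (try simp only [← Finset.sum_mul, ← Finset.mul_sum]) <;> ring)
end

section
/- With Ψ_α as in the paper, for X, Y ∈ g̃_{-2} ≅ ℝ^{2n} = ℝⁿ⊕ℝⁿ (written X = (X₁,X₂), Y = (Y₁,Y₂)), and W₀ the element of g̃₁ᴱ whose unique nonzero entry equals 1, the lower-right 2n×2n block of Ψ_α(X, [Y,W₀]) equals (1/2)·[[X₁Y₂ᵀ + Y₁X₂ᵀ + (Y₂ᵀX₁ + X₂ᵀY₁)·id, X₁Y₁ᵀ + Y₁X₁ᵀ], [−X₂Y₂ᵀ − Y₂X₂ᵀ, −Y₂X₁ᵀ − X₂Y₁ᵀ − (Y₂ᵀX₁ + X₂ᵀY₁)·id]], and all other blocks of Ψ_α(X,[Y,W₀]) vanish. -/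
/-- The lift `[[0,−Y₂ᵀ,0],[0,0,Y₁],[0,0,0]]` of `[Y,W₀] ∈ g̃₋₁ⱽ` under `α`. -/
noncomputable def etaLift {n : ℕ} (Y1 Y2 : Fin n → ℝ) : Matrix (Idx n) (Idx n) ℝ :=
  Matrix.of fun i j =>
    match i, j with
    | Sum.inl _, Sum.inr (Sum.inl k) => -Y2 k
    | Sum.inr (Sum.inl k), Sum.inr (Sum.inr _) => Y1 k
    | _, _ => 0

/-- The explicit value of `Ψ_α(X, [Y,W₀])`: only the lower-right 2n×2n block is
nonzero, and it is given by the formula of Lemma 3.6 of the paper. -/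
noncomputable def psiTarget {n : ℕ} (X1 X2 Y1 Y2 : Fin n → ℝ) : Matrix (Jdx n) (Jdx n) ℝ :=
  Matrix.of fun i j =>
    match i, j with
    | Sum.inr (Sum.inr (Sum.inl i)), Sum.inr (Sum.inr (Sum.inl j)) =>
        (X1 i * Y2 j + Y1 i * X2 j +
          (if i = j then (∑ k, Y2 k * X1 k) + (∑ k, X2 k * Y1 k) else 0)) / 2
    | Sum.inr (Sum.inr (Sum.inl i)), Sum.inr (Sum.inr (Sum.inr j)) =>
        (X1 i * Y1 j + Y1 i * X1 j) / 2
    | Sum.inr (Sum.inr (Sum.inr i)), Sum.inr (Sum.inr (Sum.inl j)) =>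
        (-(X2 i * Y2 j) - Y2 i * X2 j) / 2
    | Sum.inr (Sum.inr (Sum.inr i)), Sum.inr (Sum.inr (Sum.inr j)) =>
        (-(Y2 i * X1 j) - X2 i * Y1 j -
          (if i = j then (∑ k, Y2 k * X1 k) + (∑ k, X2 k * Y1 k) else 0)) / 2
    | _, _ => 0

/-- with lifts `ξ = [[0,0,0],[X₁,0,0],[0,X₂ᵀ,0]]` of `X ∈ g̃₋₂` and
`η = [[0,−Y₂ᵀ,0],[0,0,Y₁],[0,0,0]]` of `[Y,W₀] ∈ g̃₋₁ⱽ`, the value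
`Ψ_α(X, [Y,W₀]) = [α(ξ), α(η)] − α([ξ,η])` is exactly the matrix `psiTarget`. -/
theorem Psi_alpha_explicit_formula (n : ℕ) (X1 X2 Y1 Y2 : Fin n → ℝ) :
    alphaMap (xiLow X1 X2 0) * alphaMap (etaLift Y1 Y2) -
      alphaMap (etaLift Y1 Y2) * alphaMap (xiLow X1 X2 0) -
      alphaMap (xiLow X1 X2 0 * etaLift Y1 Y2 - etaLift Y1 Y2 * xiLow X1 X2 0) =
    psiTarget X1 X2 Y1 Y2 := by
  ext i j
  simp only [Matrix.sub_apply, Matrix.mul_apply, alphaMap, etaLift, xiLow, psiTarget,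
    Matrix.of_apply, Fintype.sum_sum_type]
  rcases i with _ | _ | i | i <;> rcases j with _ | _ | j | j <;>
    simp <;> (try split_ifs) <;> ring_nf <;>
    simp only [Finset.sum_mul, ← Finset.sum_add_distrib, ← Finset.sum_sub_distrib] <;>
    first
      | ring1
      | (apply Finset.sum_eq_zero; intros; ring)
      | simp [mul_comm]
end

section
/- The symmetric trilinear form S(ξ,η,ζ) obtained as the complete symmetrization of (ξ,η,ζ) ↦ L(ξ, Jη)·Jζ on a symplectic vector space (V, L) with a compatible product structure J (J² = id, with ±1 eigenspaces Lagrangian for L) satisfies: a vector ξ ∈ V is an eigenvector of J if and only if S(ξ,ξ,ξ) = 0 and there exists η ∈ V with S(ξ,ξ,η) a nonzero multiple of ξ. -/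
/-- The complete symmetrization (up to the overall factor 1/6) of the trilinear map
`(ξ,η,ζ) ↦ L(ξ,Jη)·Jζ` associated to a bilinear form `L` and an endomorphism `J`. -/
noncomputable def symS {V : Type*} [AddCommGroup V] [Module ℝ V]
    (L : V →ₗ[ℝ] V →ₗ[ℝ] ℝ) (J : V →ₗ[ℝ] V) (ξ η ζ : V) : V :=
  L ξ (J η) • J ζ + L ξ (J ζ) • J η + L η (J ξ) • J ζ +
  L η (J ζ) • J ξ + L ζ (J ξ) • J η + L ζ (J η) • J ξ

/-- for a symplectic vector space `(V, L)` with a compatible product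
structure `J` (`J² = id`, both eigenspaces Lagrangian), a nonzero vector `ξ` is an
eigenvector of `J` if and only if `S(ξ,ξ,ξ) = 0` and there is `η` with `S(ξ,ξ,η)` a
nonzero multiple of `ξ`. -/
theorem eigenvectors_from_symmetrization
    {V : Type*} [AddCommGroup V] [Module ℝ V] [FiniteDimensional ℝ V]
    (L : V →ₗ[ℝ] V →ₗ[ℝ] ℝ) (J : V →ₗ[ℝ] V)
    (hskew : ∀ a b : V, L a b = -L b a)
    (hnd : ∀ a : V, (∀ b : V, L a b = 0) → a = 0)
    (hJ2 : ∀ a : V, J (J a) = a)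
    (hLagP : ∀ a b : V, J a = a → J b = b → L a b = 0)
    (hLagM : ∀ a b : V, J a = -a → J b = -b → L a b = 0) :
    ∀ ξ : V, ξ ≠ 0 →
      ((J ξ = ξ ∨ J ξ = -ξ) ↔
        (symS L J ξ ξ ξ = 0 ∧ ∃ η : V, ∃ c : ℝ, c ≠ 0 ∧ symS L J ξ ξ η = c • ξ)) := by
  intro ξ hξ
  have hLaa : ∀ a : V, L a a = 0 := fun a => by have := hskew a a; linarith
  constructor
  · intro hev
    obtain ⟨b, hb⟩ : ∃ b, L ξ b ≠ 0 := by
      by_contra hc; push_neg at hc; exact hξ (hnd ξ hc)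
    rcases hev with h | h
    · have h1 : L ξ (J b) = - L ξ b := by
        have hpb : J (b + J b) = b + J b := by
          rw [map_add, hJ2]; abel
        have := hLagP ξ (b + J b) h hpb
        rw [map_add] at this; linarith
      constructor
      · simp [symS, h, hLaa]
      · refine ⟨b, -4 * L ξ b, by simpa using hb, ?_⟩
        have h2 : L b (J ξ) = - L ξ b := by rw [h, hskew]
        simp only [symS, h, hLaa, h1, h2, hskew b ξ]
        module
    · have h1 : L ξ (J b) = L ξ b := by
        have hpb : J (b - J b) = -(b - J b) := by
          rw [map_sub, hJ2]; abel
        have := hLagM ξ (b - J b) h hpb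
        rw [map_sub] at this; linarith
      constructor
      · simp [symS, h, hLaa]
      · refine ⟨b, -4 * L ξ b, by simpa using hb, ?_⟩
        have h2 : L b (J ξ) = L ξ b := by rw [h, map_neg, hskew]; ring
        have h0 : L ξ (J ξ) = 0 := by rw [h, map_neg, hLaa, neg_zero]
        simp only [symS, h, h0, h1, h2, hskew b ξ, map_neg, hLaa, neg_zero]
        module
  · rintro ⟨h0, η, c, hc, hS⟩
    have hJξ : J ξ ≠ 0 := by
      intro hz
      exact hξ (by rw [← hJ2 ξ, hz, map_zero])
    have hLJ : L ξ (J ξ) = 0 := by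
      have h0' : (6 * L ξ (J ξ)) • J ξ = 0 := by
        have : symS L J ξ ξ ξ = (6 * L ξ (J ξ)) • J ξ := by
          simp only [symS]; module
        rw [← this, h0]
      rcases smul_eq_zero.mp h0' with h | h
      · linarith
      · exact absurd h hJξ
    set d : ℝ := 2 * (L ξ (J η) + L η (J ξ)) with hd
    have hSd : d • J ξ = c • ξ := by
      have : symS L J ξ ξ η = d • J ξ := by
        simp only [symS, hd, hLJ]; module
      rw [← this, hS]
    have hdne : d ≠ 0 := by
      intro hdz
      rw [hdz, zero_smul] at hSd
      rcases smul_eq_zero.mp hSd.symm with h | h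
      · exact hc h
      · exact hξ h
    have hSd2 : d • ξ = c • J ξ := by
      have := congrArg J hSd
      rwa [map_smul, map_smul, hJ2] at this
    have hkey : (d * d - c * c) • J ξ = 0 := by
      have h1 : d • (d • J ξ) = d • (c • ξ) := by rw [hSd]
      rw [smul_smul, smul_comm d c, hSd2, smul_smul] at h1
      rw [sub_smul, h1, sub_self]
    have hdc : d * d = c * c := by
      rcases smul_eq_zero.mp hkey with h | h
      · linarith [sub_eq_zero.mp h]
      · exact absurd h hJξ
    rcases mul_self_eq_mul_self_iff.mp hdc with h | h
    · left
      have : d • J ξ = d • ξ := by rw [hSd, h]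
      exact smul_right_injective V hdne this
    · right
      have : d • J ξ = d • (-ξ) := by
        rw [hSd, h, smul_neg, neg_smul, neg_neg]
      exact smul_right_injective V hdne this
end

section
/- For a symplectic vector space (V, L) with compatible almost complex structure J (J² = −id and L(Jξ, Jη) = L(ξ,η)), the symmetric trilinear map S = complete symmetrization of (ξ,η,ζ) ↦ L(ξ,Jη)·Jζ satisfies: S determines J up to sign. More precisely, if J and J' are two such structures with equal associated symmetrizations S = S', then J' = J or J' = −J. -/
/-- If two real quadratic(-type) functions have pointwise product zero, one of them
vanishes identically. -/
lemma quad_mul_eq_zero {V : Type*} [AddCommGroup V] [Module ℝ V]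
    (u v : V → ℝ) (cu cv : V → V → ℝ)
    (hu : ∀ x y : V, ∀ t : ℝ, u (x + t • y) = u x + t * cu x y + t ^ 2 * u y)
    (hv : ∀ x y : V, ∀ t : ℝ, v (x + t • y) = v x + t * cv x y + t ^ 2 * v y)
    (h : ∀ x, u x * v x = 0) :
    (∀ x, u x = 0) ∨ (∀ x, v x = 0) := by
  by_contra hc
  push_neg at hc
  obtain ⟨⟨a, ha⟩, b, hb⟩ := hc
  set p : Polynomial ℝ := Polynomial.C (u a) + Polynomial.C (cu a b) * Polynomial.X
    + Polynomial.C (u b) * Polynomial.X ^ 2 with hp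
  set q : Polynomial ℝ := Polynomial.C (v a) + Polynomial.C (cv a b) * Polynomial.X
    + Polynomial.C (v b) * Polynomial.X ^ 2 with hq
  have hpq : p * q = 0 := by
    apply Polynomial.funext
    intro t
    have h0 := h (a + t • b)
    rw [hu a b t, hv a b t] at h0
    simp only [hp, hq, Polynomial.eval_mul, Polynomial.eval_add, Polynomial.eval_C,
      Polynomial.eval_X, Polynomial.eval_pow, Polynomial.eval_zero]
    linear_combination h0
  rcases mul_eq_zero.mp hpq with h1 | h1
  · have : p.coeff 0 = 0 := by rw [h1]; simp
    simp [hp, Polynomial.coeff_X_pow] at this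
    exact ha this
  · have : q.coeff 2 = 0 := by rw [h1]; simp
    simp [hq, Polynomial.coeff_X_pow, Polynomial.coeff_C] at this
    exact hb this

/-- for a symplectic vector space `(V, L)` with compatible almost
complex structures `J, J'` (`J² = −id`, `L(J·,J·) = L(·,·)`), the symmetrization `S`
determines `J` up to sign: if the symmetrizations agree then `J' = J` or `J' = −J`. -/
theorem acs_determined_up_to_sign_by_symmetrization
    {V : Type*} [AddCommGroup V] [Module ℝ V] [FiniteDimensional ℝ V]
    (L : V →ₗ[ℝ] V →ₗ[ℝ] ℝ) (J J' : V →ₗ[ℝ] V)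
    (hskew : ∀ a b : V, L a b = -L b a)
    (hnd : ∀ a : V, (∀ b : V, L a b = 0) → a = 0)
    (hJ2 : ∀ a : V, J (J a) = -a) (hJ'2 : ∀ a : V, J' (J' a) = -a)
    (hJc : ∀ a b : V, L (J a) (J b) = L a b)
    (hJ'c : ∀ a b : V, L (J' a) (J' b) = L a b)
    (hS : ∀ a b c : V, symS L J a b c = symS L J' a b c) :
    J' = J ∨ J' = -J := by
  classical
  -- symmetry of the "Levi forms"
  have gsymm : ∀ a b : V, L a (J b) = L b (J a) := by
    intro a b
    have h1 := hJc a (J b)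
    rw [hJ2] at h1
    rw [← h1, map_neg, hskew]
    ring
  have g'symm : ∀ a b : V, L a (J' b) = L b (J' a) := by
    intro a b
    have h1 := hJ'c a (J' b)
    rw [hJ'2] at h1
    rw [← h1, map_neg, hskew]
    ring
  by_cases hsub : ∀ a : V, a = 0
  · left; ext x; rw [hsub x]; simp
  push_neg at hsub
  -- key identity with all three arguments equal
  have key1 : ∀ a : V, L a (J a) • J a = L a (J' a) • J' a := by
    intro a
    have h := hS a a a
    simp only [symS] at h
    have h6 : (6 : ℝ) • (L a (J a) • J a) = (6 : ℝ) • (L a (J' a) • J' a) := by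
      calc (6 : ℝ) • (L a (J a) • J a)
          = L a (J a) • J a + L a (J a) • J a + L a (J a) • J a +
            L a (J a) • J a + L a (J a) • J a + L a (J a) • J a := by module
        _ = L a (J' a) • J' a + L a (J' a) • J' a + L a (J' a) • J' a +
            L a (J' a) • J' a + L a (J' a) • J' a + L a (J' a) • J' a := h
        _ = (6 : ℝ) • (L a (J' a) • J' a) := by module
    exact smul_right_injective V (by norm_num : (6:ℝ) ≠ 0) h6
  -- key identity with arguments a, a, b
  have key2 : ∀ a b : V, (2 * L a (J a)) • J b + (4 * L a (J b)) • J a =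
      (2 * L a (J' a)) • J' b + (4 * L a (J' b)) • J' a := by
    intro a b
    have h := hS a a b
    simp only [symS] at h
    rw [gsymm b a, g'symm b a] at h
    calc (2 * L a (J a)) • J b + (4 * L a (J b)) • J a
        = L a (J a) • J b + L a (J b) • J a + L a (J a) • J b +
          L a (J b) • J a + L a (J b) • J a + L a (J b) • J a := by module
      _ = L a (J' a) • J' b + L a (J' b) • J' a + L a (J' a) • J' b +
          L a (J' b) • J' a + L a (J' b) • J' a + L a (J' b) • J' a := h
      _ = (2 * L a (J' a)) • J' b + (4 * L a (J' b)) • J' a := by module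
  -- squares of the quadratic forms agree
  have keysq : ∀ a : V, (L a (J a)) ^ 2 = (L a (J' a)) ^ 2 := by
    intro a
    have h := congrArg (fun x => L x a) (key1 a)
    simp only [map_smul, LinearMap.smul_apply, smul_eq_mul] at h
    rw [hskew (J a) a, hskew (J' a) a] at h
    nlinarith [h]
  -- existence of an anisotropic vector
  have hex : ∃ a : V, L a (J a) ≠ 0 := by
    by_contra hq0
    push_neg at hq0
    have hgz : ∀ a b : V, L a (J b) = 0 := by
      intro a b
      have h := hq0 (a + b)
      simp only [map_add, LinearMap.add_apply] at h
      have h2 := gsymm a b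
      have h3 := hq0 a
      have h4 := hq0 b
      linarith
    obtain ⟨a, ha⟩ := hsub
    apply ha
    apply hnd
    intro b
    have h := hgz a (-(J b))
    simpa [hJ2] using h
  obtain ⟨a0, ha0⟩ := hex
  -- polynomial argument: the quadratic forms agree up to a global sign
  have hquad := quad_mul_eq_zero
    (fun x => L x (J x) - L x (J' x)) (fun x => L x (J x) + L x (J' x))
    (fun x y => (L x (J y) + L y (J x)) - (L x (J' y) + L y (J' x)))
    (fun x y => (L x (J y) + L y (J x)) + (L x (J' y) + L y (J' x)))
    (by intro x y t; simp only [map_add, map_smul, LinearMap.add_apply,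
          LinearMap.smul_apply, smul_eq_mul]; ring)
    (by intro x y t; simp only [map_add, map_smul, LinearMap.add_apply,
          LinearMap.smul_apply, smul_eq_mul]; ring)
    (by intro x
        show (L x (J x) - L x (J' x)) * (L x (J x) + L x (J' x)) = 0
        linear_combination keysq x)
  rcases hquad with hcase | hcase
  · -- q = q' everywhere; get g = g' by polarization
    left
    have hq : ∀ x : V, L x (J x) = L x (J' x) := fun x => by
      have h : L x (J x) - L x (J' x) = 0 := hcase x
      linarith
    have hgg' : ∀ a b : V, L a (J b) = L a (J' b) := by
      intro a b
      have h := hq (a + b)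
      simp only [map_add, LinearMap.add_apply] at h
      have h1 := hq a
      have h2 := hq b
      have h3 := gsymm a b
      have h4 := g'symm a b
      linarith
    -- at a0 : J a0 = J' a0
    have hJa0 : J a0 = J' a0 := by
      have h := key1 a0
      rw [← hq a0] at h
      exact smul_right_injective V ha0 h
    ext b
    have h := key2 a0 b
    rw [← hq a0, ← hgg' a0 b, ← hJa0] at h
    have h' : (2 * L a0 (J a0)) • J b = (2 * L a0 (J a0)) • J' b := by
      have := add_right_cancel h
      exact this
    have := smul_right_injective V (by
      intro hc; apply ha0; linarith : (2 * L a0 (J a0)) ≠ 0) h'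
    exact this.symm
  · -- q = -q' everywhere
    right
    have hq : ∀ x : V, L x (J' x) = -L x (J x) := fun x => by
      have h : L x (J x) + L x (J' x) = 0 := hcase x
      linarith
    have hgg' : ∀ a b : V, L a (J' b) = -L a (J b) := by
      intro a b
      have h := hq (a + b)
      simp only [map_add, LinearMap.add_apply] at h
      have h1 := hq a
      have h2 := hq b
      have h3 := gsymm a b
      have h4 := g'symm a b
      linarith
    have hJa0 : J' a0 = -J a0 := by
      have h := key1 a0
      rw [hq a0] at h
      have h' : L a0 (J a0) • J a0 = L a0 (J a0) • (-J' a0) := by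
        rw [smul_neg, ← neg_smul]; exact h
      have := smul_right_injective V ha0 h'
      rw [this]; simp
    ext b
    have h := key2 a0 b
    rw [hq a0, hgg' a0 b, hJa0] at h
    have h2 : (2 * L a0 (J a0)) • J b + (4 * L a0 (J b)) • J a0 =
        (2 * L a0 (J a0)) • (-J' b) + (4 * L a0 (J b)) • J a0 := by
      rw [h]; module
    have h' : (2 * L a0 (J a0)) • J b = (2 * L a0 (J a0)) • (-J' b) :=
      add_right_cancel h2
    have := smul_right_injective V (by
      intro hc; apply ha0; linarith : (2 * L a0 (J a0)) ≠ 0) h'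
    simp only [LinearMap.neg_apply]
    rw [this]; simp
end

section
/- The real-linear map α from the CR case, sending the su(p+1,q+1) matrix [[w, Z, iz],[X, A, −𝕀Z*],[ix, −X*𝕀, −w̄]] to the sl(2n+2,ℝ) matrix [[Re(w), −z, Re(Z), −Im(Z)],[x, −Re(w), −Im(X*𝕀), −Re(X*𝕀)],[Re(X), Im(𝕀Z*), Re(A), −Im(A)+Im(w)·id],[Im(X), −Re(𝕀Z*), Im(A)−Im(w)·id, Re(A)]], is a well-defined injective real-linear map into trace-free matrices. -/
/-- The signature vector of `diag(1,…,1,−1,…,−1)` with `p` ones and `q` minus ones. -/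
def sigC (p q : ℕ) : Fin (p + q) → ℂ := fun k => if (k : ℕ) < p then 1 else -1

/-- Real signature vector. -/
def sigR (p q : ℕ) : Fin (p + q) → ℝ := fun k => if (k : ℕ) < p then 1 else -1

/-- Membership in `su(p+1,q+1) ⊂ sl(p+q+2,ℂ)` (block form
`[[w, Z, iz],[X, A, −𝕀Z*],[ix, −X*𝕀, −w̄]]`). -/
def InSU (p q : ℕ) (M : Matrix (Idx (p + q)) (Idx (p + q)) ℂ) : Prop :=
  (M (Sum.inr (Sum.inr ())) (Sum.inl ())).re = 0 ∧
  (M (Sum.inl ()) (Sum.inr (Sum.inr ()))).re = 0 ∧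
  M (Sum.inr (Sum.inr ())) (Sum.inr (Sum.inr ())) =
    -(starRingEnd ℂ) (M (Sum.inl ()) (Sum.inl ())) ∧
  (∀ k, M (Sum.inr (Sum.inl k)) (Sum.inr (Sum.inr ())) =
    -(sigC p q k) * (starRingEnd ℂ) (M (Sum.inl ()) (Sum.inr (Sum.inl k)))) ∧
  (∀ k, M (Sum.inr (Sum.inr ())) (Sum.inr (Sum.inl k)) =
    -(starRingEnd ℂ) (M (Sum.inr (Sum.inl k)) (Sum.inl ())) * sigC p q k) ∧
  (∀ k l, sigC p q k * M (Sum.inr (Sum.inl k)) (Sum.inr (Sum.inl l)) +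
    (starRingEnd ℂ) (M (Sum.inr (Sum.inl l)) (Sum.inr (Sum.inl k))) * sigC p q l = 0) ∧
  M (Sum.inl ()) (Sum.inl ()) - (starRingEnd ℂ) (M (Sum.inl ()) (Sum.inl ())) +
    ∑ k, M (Sum.inr (Sum.inl k)) (Sum.inr (Sum.inl k)) = 0

/-- The real-linear map `α` of the CR case, sending the `su(p+1,q+1)` matrix
`[[w, Z, iz],[X, A, −𝕀Z*],[ix, −X*𝕀, −w̄]]` to the real matrix
`[[Re w, −z, Re Z, −Im Z],[x, −Re w, −Im(X*𝕀), −Re(X*𝕀)],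
[Re X, Im(𝕀Z*), Re A, −Im A + Im(w)·id],[Im X, −Re(𝕀Z*), Im A − Im(w)·id, Re A]]`. -/
noncomputable def alphaCR (p q : ℕ) (M : Matrix (Idx (p + q)) (Idx (p + q)) ℂ) :
    Matrix (Jdx (p + q)) (Jdx (p + q)) ℝ :=
  Matrix.of fun i j =>
    match i, j with
    | Sum.inl _, Sum.inl _ => (M (Sum.inl ()) (Sum.inl ())).re
    | Sum.inl _, Sum.inr (Sum.inl _) => -(M (Sum.inl ()) (Sum.inr (Sum.inr ()))).im
    | Sum.inl _, Sum.inr (Sum.inr (Sum.inl l)) => (M (Sum.inl ()) (Sum.inr (Sum.inl l))).re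
    | Sum.inl _, Sum.inr (Sum.inr (Sum.inr l)) => -(M (Sum.inl ()) (Sum.inr (Sum.inl l))).im
    | Sum.inr (Sum.inl _), Sum.inl _ => (M (Sum.inr (Sum.inr ())) (Sum.inl ())).im
    | Sum.inr (Sum.inl _), Sum.inr (Sum.inl _) => -(M (Sum.inl ()) (Sum.inl ())).re
    | Sum.inr (Sum.inl _), Sum.inr (Sum.inr (Sum.inl l)) =>
        -(((starRingEnd ℂ) (M (Sum.inr (Sum.inl l)) (Sum.inl ()))).im * sigR p q l)
    | Sum.inr (Sum.inl _), Sum.inr (Sum.inr (Sum.inr l)) =>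
        -(((starRingEnd ℂ) (M (Sum.inr (Sum.inl l)) (Sum.inl ()))).re * sigR p q l)
    | Sum.inr (Sum.inr (Sum.inl k)), Sum.inl _ => (M (Sum.inr (Sum.inl k)) (Sum.inl ())).re
    | Sum.inr (Sum.inr (Sum.inl k)), Sum.inr (Sum.inl _) =>
        sigR p q k * ((starRingEnd ℂ) (M (Sum.inl ()) (Sum.inr (Sum.inl k)))).im
    | Sum.inr (Sum.inr (Sum.inl k)), Sum.inr (Sum.inr (Sum.inl l)) =>
        (M (Sum.inr (Sum.inl k)) (Sum.inr (Sum.inl l))).re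
    | Sum.inr (Sum.inr (Sum.inl k)), Sum.inr (Sum.inr (Sum.inr l)) =>
        -(M (Sum.inr (Sum.inl k)) (Sum.inr (Sum.inl l))).im +
          (if k = l then (M (Sum.inl ()) (Sum.inl ())).im else 0)
    | Sum.inr (Sum.inr (Sum.inr k)), Sum.inl _ => (M (Sum.inr (Sum.inl k)) (Sum.inl ())).im
    | Sum.inr (Sum.inr (Sum.inr k)), Sum.inr (Sum.inl _) =>
        -(sigR p q k * ((starRingEnd ℂ) (M (Sum.inl ()) (Sum.inr (Sum.inl k)))).re)
    | Sum.inr (Sum.inr (Sum.inr k)), Sum.inr (Sum.inr (Sum.inl l)) =>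
        (M (Sum.inr (Sum.inl k)) (Sum.inr (Sum.inl l))).im -
          (if k = l then (M (Sum.inl ()) (Sum.inl ())).im else 0)
    | Sum.inr (Sum.inr (Sum.inr k)), Sum.inr (Sum.inr (Sum.inr l)) =>
        (M (Sum.inr (Sum.inl k)) (Sum.inr (Sum.inl l))).re

set_option maxHeartbeats 1000000 in
/-- `α` is a well-defined injective real-linear map from `su(p+1,q+1)`
into the trace-free real `(2n+2)×(2n+2)` matrices. -/
theorem alphaCR_well_defined_injective (p q : ℕ) :
    (∀ M N : Matrix (Idx (p + q)) (Idx (p + q)) ℂ,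
      alphaCR p q (M + N) = alphaCR p q M + alphaCR p q N) ∧
    (∀ (r : ℝ) (M : Matrix (Idx (p + q)) (Idx (p + q)) ℂ),
      alphaCR p q (r • M) = r • alphaCR p q M) ∧
    (∀ M : Matrix (Idx (p + q)) (Idx (p + q)) ℂ, InSU p q M → (alphaCR p q M).trace = 0) ∧
    (∀ M : Matrix (Idx (p + q)) (Idx (p + q)) ℂ, InSU p q M → alphaCR p q M = 0 → M = 0) := by
  have hE0 : ∀ (M : Matrix (Idx (p + q)) (Idx (p + q)) ℂ), True := fun _ => trivial
  constructor
  · intro M N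
    ext i j
    rcases i with _ | _ | k | k <;> rcases j with _ | _ | l | l <;>
      simp [alphaCR, Matrix.add_apply, map_add] <;>
      first | (split_ifs <;> ring) | ring
  constructor
  · intro r M
    ext i j
    rcases i with _ | _ | k | k <;> rcases j with _ | _ | l | l <;>
      simp only [alphaCR, Matrix.of_apply, Matrix.smul_apply, Complex.real_smul,
        Complex.mul_re, Complex.mul_im, Complex.ofReal_re, Complex.ofReal_im, map_mul,
        Complex.conj_ofReal, smul_eq_mul] <;>
      first | (split_ifs <;> ring) | ring
  constructor
  · intro M hM
    obtain ⟨h1, h2, h3, h4, h5, h6, h7⟩ := hM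
    have htr : ∑ k, (M (Sum.inr (Sum.inl k)) (Sum.inr (Sum.inl k))).re = 0 := by
      have h := congrArg Complex.re h7
      rw [Complex.add_re, Complex.sub_re, Complex.conj_re, Complex.re_sum] at h
      simp only [Complex.zero_re] at h
      linarith
    have h2tr : (alphaCR p q M).trace =
        2 * ∑ k, (M (Sum.inr (Sum.inl k)) (Sum.inr (Sum.inl k))).re := by
      simp [Matrix.trace, Matrix.diag, Fintype.sum_sum_type, alphaCR]
      ring
    rw [h2tr, htr, mul_zero]
  · intro M hM h0
    obtain ⟨h1, h2, h3, h4, h5, h6, h7⟩ := hM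
    have hE : ∀ i j, alphaCR p q M i j = 0 := fun i j => by rw [h0]; rfl
    have hwre : (M (Sum.inl ()) (Sum.inl ())).re = 0 :=
      hE (Sum.inl ()) (Sum.inl ())
    have hAkkim : ∀ k, (M (Sum.inr (Sum.inl k)) (Sum.inr (Sum.inl k))).im =
        (M (Sum.inl ()) (Sum.inl ())).im := fun k => by
      have h : -(M (Sum.inr (Sum.inl k)) (Sum.inr (Sum.inl k))).im +
          (if k = k then (M (Sum.inl ()) (Sum.inl ())).im else 0) = 0 :=
        hE (Sum.inr (Sum.inr (Sum.inl k))) (Sum.inr (Sum.inr (Sum.inr k)))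
      simp at h
      linarith
    have htr : 2 * (M (Sum.inl ()) (Sum.inl ())).im +
        ∑ k, (M (Sum.inr (Sum.inl k)) (Sum.inr (Sum.inl k))).im = 0 := by
      have h := congrArg Complex.im h7
      rw [Complex.add_im, Complex.sub_im, Complex.conj_im, Complex.im_sum] at h
      simp only [Complex.zero_im] at h
      linarith
    have hsum : ∑ k, (M (Sum.inr (Sum.inl k)) (Sum.inr (Sum.inl k))).im =
        (p + q : ℕ) * (M (Sum.inl ()) (Sum.inl ())).im := by
      rw [Finset.sum_congr rfl (fun k _ => hAkkim k), Finset.sum_const,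
        Finset.card_univ, Fintype.card_fin, nsmul_eq_mul]
    have hwim : (M (Sum.inl ()) (Sum.inl ())).im = 0 := by
      rw [hsum] at htr
      have hc : (0:ℝ) < 2 + (p + q : ℕ) := by positivity
      have hm : (2 + ((p + q : ℕ):ℝ)) * (M (Sum.inl ()) (Sum.inl ())).im = 0 := by
        linarith
      exact (mul_eq_zero.mp hm).resolve_left hc.ne'
    have hw : M (Sum.inl ()) (Sum.inl ()) = 0 := Complex.ext hwre hwim
    have hZ : ∀ l, M (Sum.inl ()) (Sum.inr (Sum.inl l)) = 0 := fun l => by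
      refine Complex.ext (hE (Sum.inl ()) (Sum.inr (Sum.inr (Sum.inl l)))) ?_
      have h : -(M (Sum.inl ()) (Sum.inr (Sum.inl l))).im = 0 :=
        hE (Sum.inl ()) (Sum.inr (Sum.inr (Sum.inr l)))
      simpa using neg_eq_zero.mp h
    have hX : ∀ k, M (Sum.inr (Sum.inl k)) (Sum.inl ()) = 0 := fun k => by
      exact Complex.ext (hE (Sum.inr (Sum.inr (Sum.inl k))) (Sum.inl ()))
        (hE (Sum.inr (Sum.inr (Sum.inr k))) (Sum.inl ()))
    ext i j
    rcases i with _ | k | _ <;> rcases j with _ | l | _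
    · exact hw
    · exact hZ l
    · refine Complex.ext h2 ?_
      have h : -(M (Sum.inl ()) (Sum.inr (Sum.inr ()))).im = 0 :=
        hE (Sum.inl ()) (Sum.inr (Sum.inl ()))
      simpa using (neg_eq_zero.mp h)
    · exact hX k
    · refine Complex.ext
        (hE (Sum.inr (Sum.inr (Sum.inl k))) (Sum.inr (Sum.inr (Sum.inl l)))) ?_
      have h : -(M (Sum.inr (Sum.inl k)) (Sum.inr (Sum.inl l))).im +
          (if k = l then (M (Sum.inl ()) (Sum.inl ())).im else 0) = 0 :=
        hE (Sum.inr (Sum.inr (Sum.inl k))) (Sum.inr (Sum.inr (Sum.inr l)))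
      rw [hwim] at h
      simp at h
      simpa using h
    · rw [h4 k, hZ k]
      simp
    · refine Complex.ext h1 ?_
      have h : (M (Sum.inr (Sum.inr ())) (Sum.inl ())).im = 0 :=
        hE (Sum.inr (Sum.inl ())) (Sum.inl ())
      simpa using h
    · rw [h5 l, hX l]
      simp
    · rw [h3, hw]
      simp
end
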